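/- arXiv:2006.06505 — 2 statements merged into one kernel-verified Lean document; each statement's English description precedes it below -/
import Mathlib

section
/- For any cycle u_1 → u_2 → ⋯ → u_{2p} → u_1 on vertex set [n] (with u_{2p+1} = u_1) in which every undirected edge {u_j, u_{j+1}} appears at least twice, the number of distinct vertices visited is at most p + 1. -/
/-!
Double counting the `2p` steps of the cycle, each undirected edge being traversed at least twice,
shows that there are at most `p` distinct edges. A walk through `k` distinct edges visits at most
`k + 1` vertices, since every vertex other than the start is first reached along an edge that has
not been traversed before.
-/

open Finset

theorem Finset.two_mul_card_image_le_card {α β : Type*} [DecidableEq β] {f : α → β}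
    {s : Finset α} (h : ∀ a ∈ s, ∃ a' ∈ s, a' ≠ a ∧ f a' = f a) :
    2 * #(s.image f) ≤ #s := by
  refine mul_card_image_le_card s 2 fun b hb => ?_
  obtain ⟨a, ha, rfl⟩ := mem_image.1 hb
  obtain ⟨a', ha', hne, heq⟩ := h a ha
  exact one_lt_card.2 ⟨a', mem_filter.2 ⟨ha', heq⟩, a, mem_filter.2 ⟨ha, rfl⟩, hne⟩

theorem card_image_range_succ_le_card_edges_add_one {α : Type*} [DecidableEq α]
    (u : ℕ → α) (k : ℕ) :
    #((range (k + 1)).image u) ≤ #((range k).image fun j => s(u j, u (j + 1))) + 1 := by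
  induction k with
  | zero => simp
  | succ k ih =>
    have hvertices : (range (k + 2)).image u = insert (u (k + 1)) ((range (k + 1)).image u) := by
      rw [range_add_one, image_insert]
    have hedges : ((range (k + 1)).image fun j => s(u j, u (j + 1))) =
        insert s(u k, u (k + 1)) ((range k).image fun j => s(u j, u (j + 1))) := by
      rw [range_add_one, image_insert]
    rw [hvertices, hedges]
    by_cases hold : u (k + 1) ∈ (range (k + 1)).image u
    · rw [insert_eq_of_mem hold]
      exact ih.trans (Nat.add_le_add_right (card_le_card (subset_insert _ _)) 1)
    · have hnew : s(u k, u (k + 1)) ∉ (range k).image fun j => s(u j, u (j + 1)) := by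
        intro hold_edge
        obtain ⟨j, hj, hedge⟩ := mem_image.1 hold_edge
        have hj' : j < k := mem_range.1 hj
        have hend : u (k + 1) ∈ s(u j, u (j + 1)) := hedge ▸ Sym2.mem_mk_right _ _
        rcases Sym2.mem_iff.1 hend with h | h
        · exact hold (mem_image.2 ⟨j, mem_range.2 (by omega), h.symm⟩)
        · exact hold (mem_image.2 ⟨j + 1, mem_range.2 (by omega), h.symm⟩)
      rw [card_insert_of_notMem hold, card_insert_of_notMem hnew]
      omega

theorem stmt4_general {n p : ℕ} (u : ℕ → Fin n)
    (hrep : ∀ j < 2*p, ∃ j' < 2*p, j' ≠ j ∧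
      s(u j', u (j'+1)) = s(u j, u (j+1))) :
    ((Finset.range (2*p)).image u).card ≤ p + 1 := by
  have hedges : 2 * #((range (2 * p)).image fun j => s(u j, u (j + 1))) ≤ 2 * p := by
    refine (two_mul_card_image_le_card fun j hj => ?_).trans_eq (card_range _)
    obtain ⟨j', hj', hne, hsame⟩ := hrep j (mem_range.1 hj)
    exact ⟨j', mem_range.2 hj', hne, hsame⟩
  calc #((range (2 * p)).image u)
      ≤ #((range (2 * p + 1)).image u) :=
        card_le_card (image_subset_image (range_subset_range.2 (Nat.le_succ _)))
    _ ≤ #((range (2 * p)).image fun j => s(u j, u (j + 1))) + 1 :=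
        card_image_range_succ_le_card_edges_add_one u _
    _ ≤ p + 1 := by omega

/-- For a closed cycle `u 0 → u 1 → ⋯ → u (2p-1) → u 0` on `[n]` (encoded as a `2p`-periodic
function `u : ℕ → Fin n`) in which every undirected edge appears at least twice, the number of
distinct vertices visited is at most `p + 1`. -/
theorem stmt4 {n p : ℕ} (hp : 0 < p) (u : ℕ → Fin n)
    (hper : ∀ j, u (j + 2*p) = u j)
    (hrep : ∀ j < 2*p, ∃ j' < 2*p, j' ≠ j ∧
      s(u j', u (j'+1)) = s(u j, u (j+1))) :
    ((Finset.range (2*p)).image u).card ≤ p + 1 :=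
  stmt4_general u hrep
end

section
/- Let A be an n×n real symmetric matrix with zero diagonal and max_{i,j}|A_{ij}| ≤ 1, and let σ := max_i (∑_j A_{ij}²)^{1/2}. Fix a shape s of a length-2p cycle in which every edge appears at least twice, with span m(s) (number of distinct vertices), and fix a starting vertex u ∈ [n]. Then the sum over all cycles u = u_1 → u_2 → ⋯ → u_{2p} → u_1 of shape s of the product ∏_{j=1}^{2p} |A_{u_j u_{j+1}}| is at most σ^{2(m(s)−1)}. -/
/-!
Root the shape at `c 0` and let the parent of any other vertex `v` be the vertex visited just
before the first visit of `v`. The discovery edges `{parent v, v}` are pairwise distinct and each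
is traversed at least twice, so after bounding all other factors by `1` the weight of a cycle is
at most `∏_{v ≠ root} A (ψ (parent v)) (ψ v) ^ 2`. This is a product over the edges of a tree, so
summing the labels out leaf by leaf (in decreasing order of first visit) costs one row sum
`∑ y, A x y ^ 2 ≤ σ ^ 2` per non-root vertex. Dropping injectivity of the labelling only enlarges
the sum.
-/

open Finset

section TreeSum

variable {ι α : Type*} [Fintype ι] [DecidableEq ι] [Fintype α] [DecidableEq α]

lemma sum_filter_eqOn_compl_insert {M : Type*} [AddCommMonoid M] (φ₀ : ι → α) {S : Finset ι}
    {a : ι} (ha : a ∉ S) (g : (ι → α) → M) :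
    ∑ φ ∈ univ.filter (fun φ : ι → α => ∀ v ∉ insert a S, φ v = φ₀ v), g φ =
      ∑ ψ ∈ univ.filter (fun ψ : ι → α => ∀ v ∉ S, ψ v = φ₀ v), ∑ x, g (Function.update ψ a x) := by
  rw [← sum_product']
  refine sum_nbij' (fun φ => (Function.update φ a (φ₀ a), φ a))
    (fun q => Function.update q.1 a q.2) ?_ ?_ ?_ ?_ ?_
  · intro φ hφ
    simp only [mem_filter, mem_univ, true_and, mem_insert, not_or, mem_product, and_true] at hφ ⊢
    intro v hv
    by_cases hva : v = a
    · simp [hva]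
    · simpa [Function.update_of_ne hva] using hφ v ⟨hva, hv⟩
  · intro q hq
    simp only [mem_filter, mem_univ, true_and, mem_insert, not_or, mem_product, and_true] at hq ⊢
    rintro v ⟨hva, hv⟩
    simpa [Function.update_of_ne hva] using hq v hv
  · intro φ _
    simp
  · intro q hq
    simp only [mem_filter, mem_univ, true_and, mem_product] at hq
    ext1
    · simpa using (hq.1 a ha).symm
    · simp
  · intro φ _
    simp

lemma sum_filter_eqOn_compl_prod_le (B : α → α → ℝ) (hB : ∀ x y, 0 ≤ B x y) {s : ℝ}
    (hs : 0 ≤ s) (hrow : ∀ x, ∑ y, B x y ≤ s) {β : Type*} [LinearOrder β] (t : ι → β)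
    (par : ι → ι) (S : Finset ι) (hpar : ∀ v ∈ S, t (par v) < t v) (φ₀ : ι → α) :
    ∑ φ ∈ univ.filter (fun φ : ι → α => ∀ v ∉ S, φ v = φ₀ v), ∏ v ∈ S, B (φ (par v)) (φ v)
      ≤ s ^ #S := by
  -- A vertex of maximal `t` is a leaf: summing out its label costs one row sum.
  induction S using Finset.induction_on_max_value t generalizing φ₀ with
  | empty =>
    have hsingleton :
        univ.filter (fun φ : ι → α => ∀ v ∉ (∅ : Finset ι), φ v = φ₀ v) = {φ₀} := by
      ext φ
      simp [funext_iff]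
    rw [hsingleton, sum_singleton, prod_empty, card_empty, pow_zero]
  | insert a S ha hmax ih =>
    have hparS : ∀ v ∈ S, par v ≠ a := fun v hv h =>
      ((h ▸ hpar v (mem_insert_of_mem hv)).trans_le (hmax v hv)).false
    have hpara : par a ≠ a := fun h => (h ▸ hpar a (mem_insert_self a S)).false
    have hsplit : ∀ (ψ : ι → α) (x : α),
        ∏ v ∈ insert a S, B (Function.update ψ a x (par v)) (Function.update ψ a x v) =
          (∏ v ∈ S, B (ψ (par v)) (ψ v)) * B (ψ (par a)) x := by
      intro ψ x
      rw [prod_insert ha, mul_comm, Function.update_self, Function.update_of_ne hpara]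
      congr 1
      refine prod_congr rfl fun v hv => ?_
      rw [Function.update_of_ne (hparS v hv), Function.update_of_ne (ne_of_mem_of_not_mem hv ha)]
    rw [sum_filter_eqOn_compl_insert φ₀ ha, card_insert_of_notMem ha, pow_succ]
    calc _ ≤ ∑ ψ ∈ univ.filter (fun ψ : ι → α => ∀ v ∉ S, ψ v = φ₀ v),
          (∏ v ∈ S, B (ψ (par v)) (ψ v)) * s := by
          refine sum_le_sum fun ψ _ => ?_
          simp_rw [hsplit, ← mul_sum]
          exact mul_le_mul_of_nonneg_left (hrow _) (prod_nonneg fun _ _ => hB _ _)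
      _ ≤ s ^ #S * s := by
          rw [← sum_mul]
          exact mul_le_mul_of_nonneg_right
            (ih (fun v hv => hpar v (mem_insert_of_mem hv)) φ₀) hs

end TreeSum

section FirstVisit

variable {V : Type*} (c : ℕ → V)

/-- `0` for a vertex that `c` never visits. -/
noncomputable def firstVisit (v : V) : ℕ := sInf {k | c k = v}

noncomputable def parent (v : V) : V := c (firstVisit c v - 1)

variable {c}

lemma firstVisit_spec {v : V} (hv : ∃ k, c k = v) : c (firstVisit c v) = v :=
  Nat.sInf_mem hv

lemma firstVisit_le {v : V} {k : ℕ} (hk : c k = v) : firstVisit c v ≤ k :=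
  Nat.sInf_le hk

lemma firstVisit_lt_of_periodic {N : ℕ} (hc : Function.Periodic c N) (hN : 0 < N) {v : V}
    (hv : ∃ k, c k = v) : firstVisit c v < N := by
  obtain ⟨k, rfl⟩ := hv
  exact (firstVisit_le (hc.map_mod_nat k)).trans_lt (Nat.mod_lt k hN)

lemma firstVisit_pos {v : V} (hv : ∃ k, c k = v) (hv0 : v ≠ c 0) : 0 < firstVisit c v :=
  Nat.pos_of_ne_zero fun h => hv0 (h ▸ firstVisit_spec hv).symm

lemma firstVisit_parent_lt {v : V} (hv : ∃ k, c k = v) (hv0 : v ≠ c 0) :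
    firstVisit c (parent c v) < firstVisit c v :=
  (firstVisit_le rfl).trans_lt (Nat.sub_lt (firstVisit_pos hv hv0) one_pos)

lemma edge_firstVisit_pred {v : V} (hv : ∃ k, c k = v) (hv0 : v ≠ c 0) :
    s(c (firstVisit c v - 1), c (firstVisit c v - 1 + 1)) = s(parent c v, v) := by
  rw [Nat.sub_add_cancel (firstVisit_pos hv hv0), firstVisit_spec hv, parent]

lemma injOn_parent_edge (hc : Function.Surjective c) :
    Set.InjOn (fun v => s(parent c v, v)) {v | v ≠ c 0} := by
  intro v hv w hw hvw
  rcases Sym2.eq_iff.mp hvw with ⟨-, h⟩ | ⟨hpv, hpw⟩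
  · exact h
  · have hv' := firstVisit_parent_lt (hc v) hv
    have hw' := firstVisit_parent_lt (hc w) hw
    rw [hpv] at hv'
    rw [← hpw] at hw'
    exact absurd (hv'.trans hw') (lt_irrefl _)

end FirstVisit

lemma prod_le_prod_sq_of_pairs {κ ι E : Type*} [DecidableEq κ] {T : Finset κ} (e : κ → E)
    (F : E → ℝ) (hF0 : ∀ k ∈ T, 0 ≤ F (e k)) (hF1 : ∀ k ∈ T, F (e k) ≤ 1) {S : Finset ι}
    (i j : ι → κ) (hiT : ∀ v ∈ S, i v ∈ T) (hjT : ∀ v ∈ S, j v ∈ T)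
    (hij : ∀ v ∈ S, i v ≠ j v) (hej : ∀ v ∈ S, e (j v) = e (i v))
    (hinj : Set.InjOn (fun v => e (i v)) S) :
    ∏ k ∈ T, F (e k) ≤ ∏ v ∈ S, F (e (i v)) ^ 2 := by
  have hdisj : (S : Set ι).PairwiseDisjoint (fun v => ({i v, j v} : Finset κ)) := by
    intro v hv w hw hvw
    refine disjoint_left.mpr fun k hkv hkw => hvw (hinj hv hw ?_)
    simp only [mem_insert, mem_singleton] at hkv hkw
    have hev : e k = e (i v) := by rcases hkv with rfl | rfl <;> simp [hej v hv]
    have hew : e k = e (i w) := by rcases hkw with rfl | rfl <;> simp [hej w hw]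
    exact hev.symm.trans hew
  have hsub : S.biUnion (fun v => {i v, j v}) ⊆ T := by
    simp only [biUnion_subset, insert_subset_iff, singleton_subset_iff]
    exact fun v hv => ⟨hiT v hv, hjT v hv⟩
  calc ∏ k ∈ T, F (e k) ≤ ∏ k ∈ S.biUnion (fun v => {i v, j v}), F (e k) :=
        prod_le_prod_of_subset_of_le_one hsub hF0 fun k hk _ => hF1 k hk
    _ = ∏ v ∈ S, F (e (i v)) ^ 2 := by
        rw [prod_biUnion hdisj]
        refine prod_congr rfl fun v hv => ?_
        rw [prod_pair (hij v hv), hej v hv, sq]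

section Cycle

variable {V : Type*} [Fintype V] [DecidableEq V] {N : ℕ} {c : ℕ → V}

lemma prod_edge_le_prod_parent_edge_sq (hN : 0 < N) (hper : Function.Periodic c N)
    (hsurj : Function.Surjective c)
    (hrep : ∀ j < N, ∃ j' < N, j' ≠ j ∧ s(c j', c (j' + 1)) = s(c j, c (j + 1)))
    (F : Sym2 V → ℝ) (hF0 : ∀ x, 0 ≤ F x) (hF1 : ∀ x, F x ≤ 1) :
    ∏ j ∈ range N, F s(c j, c (j + 1)) ≤ ∏ v ∈ univ.erase (c 0), F s(parent c v, v) ^ 2 := by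
  choose! j' hj'N hj'ne hj'edge using hrep
  have hpred : ∀ v ∈ univ.erase (c 0), firstVisit c v - 1 < N := fun v _ =>
    (Nat.sub_le _ 1).trans_lt (firstVisit_lt_of_periodic hper hN (hsurj v))
  have hedge : ∀ v ∈ univ.erase (c 0),
      s(c (firstVisit c v - 1), c (firstVisit c v - 1 + 1)) = s(parent c v, v) := fun v hv =>
    edge_firstVisit_pred (hsurj v) (ne_of_mem_erase hv)
  have hpairs := prod_le_prod_sq_of_pairs (T := range N) (fun j => s(c j, c (j + 1))) F
    (fun _ _ => hF0 _) (fun _ _ => hF1 _) (S := univ.erase (c 0)) (fun v => firstVisit c v - 1)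
    (fun v => j' (firstVisit c v - 1)) (fun v hv => mem_range.mpr (hpred v hv))
    (fun v hv => mem_range.mpr (hj'N _ (hpred v hv))) (fun v hv => (hj'ne _ (hpred v hv)).symm)
    (fun v hv => hj'edge _ (hpred v hv)) ?_
  · refine hpairs.trans_eq (prod_congr rfl fun v hv => ?_)
    simp only [hedge v hv]
  · intro v hv w hw hvw
    simp only [hedge v hv, hedge w hw] at hvw
    exact injOn_parent_edge hsurj (ne_of_mem_erase hv) (ne_of_mem_erase hw) hvw

end Cycle

lemma le_sq_sqrt_iSup {ι : Type*} [Finite ι] (f : ι → ℝ) (hf : ∀ i, 0 ≤ f i) (i : ι) :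
    f i ≤ √(⨆ i, f i) ^ 2 := by
  have hle : f i ≤ ⨆ i, f i := le_ciSup (Set.finite_range f).bddAbove i
  rwa [Real.sq_sqrt ((hf i).trans hle)]

lemma sum_filter_embedding_le {ι α : Type*} [Fintype ι] [DecidableEq ι] [Fintype α]
    [DecidableEq α] (P : (ι → α) → Prop) [DecidablePred P] (g : (ι → α) → ℝ)
    (hg : ∀ φ, 0 ≤ g φ) :
    ∑ φ ∈ univ.filter (fun φ : ι ↪ α => P φ), g φ ≤ ∑ ψ ∈ univ.filter P, g ψ := by
  refine (sum_map _ ⟨_, DFunLike.coe_injective⟩ g).symm.trans_le ?_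
  refine sum_le_sum_of_subset_of_nonneg ?_ fun ψ _ _ => hg ψ
  intro ψ
  simp only [mem_map, mem_filter, mem_univ, true_and, Function.Embedding.coeFn_mk]
  rintro ⟨φ, hφ, rfl⟩
  exact hφ

theorem stmt5_general {n m p : ℕ} (hp : 0 < p)
    (A : Matrix (Fin n) (Fin n) ℝ) (hsym : A.IsSymm)
    (hbd : ∀ i j, |A i j| ≤ 1)
    (σ : ℝ) (hσ : σ = Real.sqrt (⨆ i, ∑ j, (A i j) ^ 2))
    (sh : ℕ → Fin m) (hper : ∀ j, sh (j + 2*p) = sh j)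
    (hsurj : Function.Surjective sh)
    (hrep : ∀ j < 2*p, ∃ j' < 2*p, j' ≠ j ∧
      s(sh j', sh (j'+1)) = s(sh j, sh (j+1)))
    (u : Fin n) :
    ∑ φ ∈ Finset.univ.filter (fun φ : Fin m ↪ Fin n => φ (sh 0) = u),
      ∏ j ∈ Finset.range (2*p), |A (φ (sh j)) (φ (sh (j+1)))|
      ≤ σ ^ (2*(m-1)) := by
  have hrow : ∀ i, ∑ j, A i j ^ 2 ≤ σ ^ 2 := fun i =>
    hσ ▸ le_sq_sqrt_iSup _ (fun _ => sum_nonneg fun _ _ => sq_nonneg _) i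
  have hcycle (ψ : Fin m → Fin n) : ∏ j ∈ range (2*p), |A (ψ (sh j)) (ψ (sh (j+1)))| ≤
      ∏ v ∈ univ.erase (sh 0), A (ψ (parent sh v)) (ψ v) ^ 2 := by
    let F : Sym2 (Fin m) → ℝ := Sym2.lift ⟨fun a b => |A (ψ a) (ψ b)|, fun a b => by
      simp only [hsym.apply]⟩
    simpa only [F, Sym2.lift_mk, sq_abs] using
      prod_edge_le_prod_parent_edge_sq (by omega) hper hsurj hrep F
        (fun e => e.ind fun _ _ => abs_nonneg _) (fun e => e.ind fun _ _ => hbd _ _)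
  calc _ ≤ ∑ φ ∈ univ.filter (fun φ : Fin m ↪ Fin n => φ (sh 0) = u),
        ∏ v ∈ univ.erase (sh 0), A (φ (parent sh v)) (φ v) ^ 2 := sum_le_sum fun φ _ => hcycle φ
    _ ≤ ∑ ψ ∈ univ.filter (fun ψ : Fin m → Fin n => ψ (sh 0) = u),
        ∏ v ∈ univ.erase (sh 0), A (ψ (parent sh v)) (ψ v) ^ 2 :=
      sum_filter_embedding_le (fun ψ => ψ (sh 0) = u)
        (fun ψ => ∏ v ∈ univ.erase (sh 0), A (ψ (parent sh v)) (ψ v) ^ 2)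
        fun _ => prod_nonneg fun _ _ => sq_nonneg _
    _ ≤ (σ ^ 2) ^ #(univ.erase (sh 0)) := by
      refine (sum_congr ?_ fun _ _ => rfl).trans_le (sum_filter_eqOn_compl_prod_le
        (fun x y => A x y ^ 2) (fun _ _ => sq_nonneg _) (sq_nonneg σ) hrow (firstVisit sh)
        (parent sh) (univ.erase (sh 0))
        (fun v hv => firstVisit_parent_lt (hsurj v) (ne_of_mem_erase hv)) (fun _ => u))
      ext ψ
      simp
    _ = σ ^ (2*(m-1)) := by simp [← pow_mul]

/-- Lemma 2.5 of Bandeira–van Handel: for a symmetric zero-diagonal matrix `A` with entries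
bounded by `1` in absolute value, a shape `sh` (a `2p`-periodic surjective cycle on `m` labels,
with every undirected edge appearing at least twice) and a starting vertex `u`, the sum over all
cycles of shape `sh` starting at `u` (i.e. over injections `φ : Fin m ↪ Fin n` with
`φ (sh 0) = u`) of the product of `|A|` along the cycle is at most `σ^(2(m-1))`,
where `σ = max_i (∑ j A i j ^ 2)^{1/2}`. -/
theorem stmt5 {n m p : ℕ} (hp : 0 < p) (hn : 0 < n)
    (A : Matrix (Fin n) (Fin n) ℝ) (hsym : A.IsSymm) (hdiag : ∀ i, A i i = 0)
    (hbd : ∀ i j, |A i j| ≤ 1)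
    (σ : ℝ) (hσ : σ = Real.sqrt (⨆ i, ∑ j, (A i j) ^ 2))
    (sh : ℕ → Fin m) (hper : ∀ j, sh (j + 2*p) = sh j)
    (hsurj : Function.Surjective sh)
    (hrep : ∀ j < 2*p, ∃ j' < 2*p, j' ≠ j ∧
      s(sh j', sh (j'+1)) = s(sh j, sh (j+1)))
    (u : Fin n) :
    ∑ φ ∈ Finset.univ.filter (fun φ : Fin m ↪ Fin n => φ (sh 0) = u),
      ∏ j ∈ Finset.range (2*p), |A (φ (sh j)) (φ (sh (j+1)))|
      ≤ σ ^ (2*(m-1)) :=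
  stmt5_general hp A hsym hbd σ hσ sh hper hsurj hrep u
end
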